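/- arXiv:1204.6520 — 16 statements merged into one kernel-verified Lean document; each statement's English description precedes it below -/
import Mathlib

section
/- A weak BCC-algebra satisfying the identity (x*y)*y = x*y for all x,y has 0*x = 0 for all x, i.e., it is a BCC-algebra. -/
theorem stmt3 (X : Type*) (m : X → X → X) (e : X)
    (h1 : ∀ x y z : X, m (m (m x y) (m z y)) (m x z) = e)
    (h2 : ∀ x : X, m x x = e)
    (h3 : ∀ x : X, m x e = x)
    (h4 : ∀ x y : X, m x y = e → m y x = e → x = y)
    (hpi : ∀ x y : X, m (m x y) y = m x y)
    : ∀ x : X, m e x = e := by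
  intro x
  have key : m (m e (m e x)) x = e := by
    have := h1 x x e
    simpa [h2, h3] using this
  have h := hpi (m e (m e x)) x
  rw [key] at h
  exact h
end

section
/- In a solid weak BCC-algebra, if x and y belong to the same branch then x*(x*y) ≤ y. -/
theorem stmt4 (X : Type*) (m : X → X → X) (e : X)
    (h1 : ∀ x y z : X, m (m (m x y) (m z y)) (m x z) = e)
    (h2 : ∀ x : X, m x x = e)
    (h3 : ∀ x : X, m x e = x)
    (h4 : ∀ x y : X, m x y = e → m y x = e → x = y)
    (hsolid : ∀ x y z : X, m e (m x y) = e → m (m x y) z = m (m x z) y)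
    : ∀ x y : X, m e (m x y) = e → m (m x (m x y)) y = e := by
  intro x y h
  have := hsolid x y (m x y) h
  rw [h2] at this
  exact this.symm
end

section
/- In a solid weak BCC-algebra, if x and y belong to the same branch B(a) with a minimal, then x*(x*y) and y*(y*x) also belong to B(a). -/
theorem stmt5 (X : Type*) (m : X → X → X) (e : X)
    (h1 : ∀ x y z : X, m (m (m x y) (m z y)) (m x z) = e)
    (h2 : ∀ x : X, m x x = e)
    (h3 : ∀ x : X, m x e = x)
    (h4 : ∀ x y : X, m x y = e → m y x = e → x = y)
    (hsolid : ∀ x y z : X, m e (m x y) = e → m (m x y) z = m (m x z) y)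
    : ∀ a x y : X, (∀ z : X, m z a = e → z = a) → m a x = e → m a y = e →
      m a (m x (m x y)) = e ∧ m a (m y (m y x)) = e := by
  intro a x y hmin hax hay
  -- transitivity of ≤
  have htrans : ∀ p q r : X, m p q = e → m q r = e → m p r = e := by
    intro p q r hpq hqr
    have h := h1 p r q
    rw [hpq, h3, hqr, h3] at h
    exact h
  -- if p ≤ q then e*(e*q) ≤ p
  have key1 : ∀ p q : X, m p q = e → m (m e (m e q)) p = e := by
    intro p q hpq
    have h := h1 p q e
    rw [hpq, h3] at h
    exact h
  -- if p ≤ q then e*q ≤ e*p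
  have antim : ∀ p q : X, m p q = e → m (m e q) (m e p) = e := by
    intro p q hpq
    have h := h1 e q p
    rw [hpq, h3] at h
    exact h
  -- if a ≤ w and v ≤ w then a ≤ v
  have branch : ∀ w v : X, m a w = e → m v w = e → m a v = e := by
    intro w v haw hvw
    have ha1 := antim v w hvw
    have ha2 := antim _ _ ha1
    have ha3 := key1 a w haw
    have ha4 := htrans _ _ _ ha2 ha3
    have ha5 := hmin _ ha4
    have ha6 := key1 v v (h2 v)
    rw [ha5] at ha6
    exact ha6
  constructor
  · have hexy : m e (m x y) = e := by
      have h := h1 a y x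
      rw [hax, h3, hay] at h
      exact h
    have hs := hsolid x y (m x y) hexy
    rw [h2] at hs
    exact branch y _ hay hs.symm
  · have heyx : m e (m y x) = e := by
      have h := h1 a x y
      rw [hay, h3, hax] at h
      exact h
    have hs := hsolid y x (m y x) heyx
    rw [h2] at hs
    exact branch x _ hax hs.symm
end

section
/- In a solid weak BCC-algebra, for any minimal element a and any x with a ≤ x, we have x*(x*a) = a. -/
theorem stmt6 (X : Type*) (m : X → X → X) (e : X)
    (h1 : ∀ x y z : X, m (m (m x y) (m z y)) (m x z) = e)
    (h2 : ∀ x : X, m x x = e)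
    (h3 : ∀ x : X, m x e = x)
    (h4 : ∀ x y : X, m x y = e → m y x = e → x = y)
    (hsolid : ∀ x y z : X, m e (m x y) = e → m (m x y) z = m (m x z) y)
    : ∀ a x : X, (∀ z : X, m z a = e → z = a) → m a x = e →
      m x (m x a) = a := by
  intro a x hmin hax
  have hbranch : m e (m x a) = e := by
    have := h1 a a x
    rwa [h2 a, hax, h3] at this
  have hs := hsolid x a (m x a) hbranch
  rw [h2 (m x a)] at hs
  exact hmin _ hs.symm
end

section
/- In a solid weak BCC-algebra, for x and y in the same branch, x*(x*(x*y)) = x*y. -/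
theorem stmt7 (X : Type*) (m : X → X → X) (e : X)
    (h1 : ∀ x y z : X, m (m (m x y) (m z y)) (m x z) = e)
    (h2 : ∀ x : X, m x x = e)
    (h3 : ∀ x : X, m x e = x)
    (h4 : ∀ x y : X, m x y = e → m y x = e → x = y)
    (hsolid : ∀ x y z : X, m e (m x y) = e → m (m x y) z = m (m x z) y)
    : ∀ x y : X, m e (m x y) = e → m x (m x (m x y)) = m x y := by
  -- antitone: u ≤ v → x*v ≤ x*u
  have anti : ∀ x u v : X, m u v = e → m (m x v) (m x u) = e := by
    intro x u v huv
    have := h1 x v u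
    rw [huv, h3] at this
    exact this
  intro x y hxy
  set u := m x (m x y) with hu
  -- u ≤ y
  have hstep1 : m u y = e := by
    have := hsolid x y (m x y) hxy
    rw [h2] at this
    exact this.symm
  -- x*y ≤ x*u
  have hstep2 : m (m x y) (m x u) = e := anti x u y hstep1
  -- e*(x*u) = e
  have hstep3 : m e (m x u) = e := by
    have := anti e (m x y) (m x u) hstep2
    rw [hxy, h3] at this
    exact this
  -- (x*u)*(x*y) = e
  have hstep4 : m (m x u) (m x y) = e := by
    have := hsolid x u (m x y) hstep3
    rw [← hu, h2] at this
    exact this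
  exact h4 (m x u) (m x y) hstep4 hstep2
end

section
/- In a solid weak BCC-algebra that is branchwise commutative (x*(x*y)=y*(y*x) for x,y in the same branch), we have x*y = x*(y*(y*x)) for all x,y in the same branch. -/
theorem stmt8 (X : Type*) (m : X → X → X) (e : X)
    (h1 : ∀ x y z : X, m (m (m x y) (m z y)) (m x z) = e)
    (h2 : ∀ x : X, m x x = e)
    (h3 : ∀ x : X, m x e = x)
    (h4 : ∀ x y : X, m x y = e → m y x = e → x = y)
    (hsolid : ∀ x y z : X, m e (m x y) = e → m (m x y) z = m (m x z) y)
    (hcomm : ∀ x y : X, m e (m x y) = e → m x (m x y) = m y (m y x))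
    : ∀ x y : X, m e (m x y) = e → m x y = m x (m y (m y x)) := by
  intro x y H
  set a := m x y with ha
  set c := m y (m y x) with hcdef
  have hc : m x a = c := hcomm x y H
  -- c * y = e
  have h6 : m c y = e := by
    have hs := hsolid x y a H
    rw [← ha, h2, hc] at hs
    exact hs.symm
  -- a * (x*c) = e
  have hA : m a (m x c) = e := by
    have := h1 x y c
    rw [← ha, h6, h3] at this
    exact this
  -- e * (x*c) = e
  have hE : m e (m x c) = e := by
    have := h1 e (m x c) a
    rw [hA, H, h3, h3] at this
    exact this
  -- (x*c) * a = e
  have hB : m (m x c) a = e := by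
    have := hsolid x c a hE
    rw [hc, h2] at this
    exact this.symm ▸ this
  exact h4 a (m x c) hA hB
end

section
/- In a solid weak BCC-algebra, if x*y = x*(y*(y*x)) holds for all x,y in the same branch, then x ≤ y implies x = y*(y*x). -/
theorem stmt9 (X : Type*) (m : X → X → X) (e : X)
    (h1 : ∀ x y z : X, m (m (m x y) (m z y)) (m x z) = e)
    (h2 : ∀ x : X, m x x = e)
    (h3 : ∀ x : X, m x e = x)
    (h4 : ∀ x y : X, m x y = e → m y x = e → x = y)
    (hsolid : ∀ x y z : X, m e (m x y) = e → m (m x y) z = m (m x z) y)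
    (hb : ∀ x y : X, m e (m x y) = e → m x y = m x (m y (m y x)))
    : ∀ x y : X, m x y = e → x = m y (m y x) := by
  intro x y hxy
  have hee : m e e = e := h2 e
  have hcond : m e (m x y) = e := by rw [hxy]; exact hee
  -- x * (y*(y*x)) = e
  have hxt : m x (m y (m y x)) = e := by
    rw [← hb x y hcond, hxy]
  -- e * (y*x) = e
  have heu : m e (m y x) = e := by
    have h := h1 y y x
    rw [h2, hxy, hee] at h
    exact h
  -- (y*(y*x)) * x = e
  have htx : m (m y (m y x)) x = e := by
    have h := hsolid y x (m y x) heu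
    rw [h2] at h
    exact h.symm
  exact h4 x (m y (m y x)) hxt htx
end

section
/- In a solid weak BCC-algebra, if x ≤ y implies x = y*(y*x) for all x,y, then x*(x*y) = y*(y*(x*(x*y))) holds for all x,y in the same branch. -/
theorem stmt10 (X : Type*) (m : X → X → X) (e : X)
    (h1 : ∀ x y z : X, m (m (m x y) (m z y)) (m x z) = e)
    (h2 : ∀ x : X, m x x = e)
    (h3 : ∀ x : X, m x e = x)
    (h4 : ∀ x y : X, m x y = e → m y x = e → x = y)
    (hsolid : ∀ x y z : X, m e (m x y) = e → m (m x y) z = m (m x z) y)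
    (hc : ∀ x y : X, m x y = e → x = m y (m y x))
    : ∀ x y : X, m e (m x y) = e → m x (m x y) = m y (m y (m x (m x y))) := by
  intro x y hxy
  have h := hsolid x y (m x y) hxy
  rw [h2 (m x y)] at h
  exact hc (m x (m x y)) y h.symm
end

section
/- In a solid weak BCC-algebra, if x*(x*y) = y*(y*(x*(x*y))) holds for all x,y in the same branch, then the algebra is branchwise commutative, i.e., x*(x*y)=y*(y*x) for all x,y in the same branch. -/
theorem stmt11 (X : Type*) (m : X → X → X) (e : X)
    (h1 : ∀ x y z : X, m (m (m x y) (m z y)) (m x z) = e)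
    (h2 : ∀ x : X, m x x = e)
    (h3 : ∀ x : X, m x e = x)
    (h4 : ∀ x y : X, m x y = e → m y x = e → x = y)
    (hsolid : ∀ x y z : X, m e (m x y) = e → m (m x y) z = m (m x z) y)
    (hd : ∀ x y : X, m e (m x y) = e → m x (m x y) = m y (m y (m x (m x y))))
    : ∀ x y : X, m e (m x y) = e → m x (m x y) = m y (m y x) := by
  -- M2 : p ≤ q → c*q ≤ c*p
  have M2 : ∀ p q c : X, m p q = e → m (m c q) (m c p) = e := by
    intro p q c hpq
    have := h1 c q p
    rw [hpq, h3] at this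
    exact this
  intro x y hxy
  -- branch symmetry: e*(y*x) = e
  have L3 := h1 y y x
  rw [h2 y, hxy] at L3
  -- L3 : e*(y*x) = e
  have hyx : m e (m y x) = e := L3
  set a := m x (m x y) with ha
  set b := m y (m y x) with hb
  -- a ≤ x : from hsolid x x (x*y)
  have hee : m e (m x x) = e := by rw [h2 x, h2 e]
  have hax : m a x = e := by
    have := hsolid x x (m x y) hee
    rw [h2 x, hxy] at this
    exact this.symm
  -- b ≤ y : from hsolid y y (y*x)
  have hee' : m e (m y y) = e := by rw [h2 y, h2 e]
  have hby : m b y = e := by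
    have := hsolid y y (m y x) hee'
    rw [h2 y, hyx] at this
    exact this.symm
  -- hd both ways
  have hda : a = m y (m y a) := hd x y hxy
  have hdb : b = m x (m x b) := hd y x hyx
  -- a ≤ b
  have h5 : m (m y x) (m y a) = e := M2 a x y hax
  have hab : m a b = e := by
    have := M2 (m y x) (m y a) y h5
    rw [← hda] at this
    exact this
  -- b ≤ a
  have h6 : m (m x y) (m x b) = e := M2 b y x hby
  have hba : m b a = e := by
    have := M2 (m x y) (m x b) x h6
    rw [← hdb] at this
    exact this
  exact h4 a b hab hba
end

section
/- In a branchwise commutative solid weak BCC-algebra, for any two elements p, q in the same branch, the element p∧q := q*(q*p) is the greatest lower bound of p and q with respect to the order x ≤ y iff x*y=0. -/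
theorem stmt12 (X : Type*) (m : X → X → X) (e : X)
    (h1 : ∀ x y z : X, m (m (m x y) (m z y)) (m x z) = e)
    (h2 : ∀ x : X, m x x = e)
    (h3 : ∀ x : X, m x e = x)
    (h4 : ∀ x y : X, m x y = e → m y x = e → x = y)
    (hsolid : ∀ x y z : X, m e (m x y) = e → m (m x y) z = m (m x z) y)
    (hcomm : ∀ x y : X, m e (m x y) = e → m x (m x y) = m y (m y x))
    : ∀ p q : X, m e (m p q) = e →
      m (m q (m q p)) p = e ∧ m (m q (m q p)) q = e ∧
      (∀ z : X, m z p = e → m z q = e → m z (m q (m q p)) = e) := by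
  -- antitone: a ≤ b → c*b ≤ c*a
  have L1 : ∀ a b c : X, m a b = e → m (m c b) (m c a) = e := by
    intro a b c h
    have := h1 c b a
    rwa [h, h3] at this
  have L2 : ∀ x z : X, m (m e (m z x)) (m x z) = e := by
    intro x z
    have := h1 x x z
    rwa [h2] at this
  have L3 : ∀ x : X, m (m e (m e x)) x = e := by
    intro x
    have := L2 x e
    rwa [h3] at this
  have L4 : ∀ x : X, m e (m e (m e x)) = m e x := by
    intro x
    exact h4 _ _ (L3 (m e x)) (L1 _ _ e (L3 x))
  have key : ∀ x y : X, m e (m x y) = e → m (m x (m x y)) x = e := by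
    intro x y h
    have := h1 x (m x y) e
    rwa [h, h3, h3] at this
  intro p q hb
  -- branch symmetry
  have hbq : m e (m q p) = e := by
    have h6 := L1 _ _ e (L2 p q)
    rwa [hb, L4] at h6
  refine ⟨?_, key q p hbq, ?_⟩
  · rw [hcomm q p hbq]
    exact key p q hb
  · intro z hzp hzq
    have hez : m e (m z q) = e := by rw [hzq]; exact h2 e
    have hz : m q (m q z) = z := by
      have := hcomm z q hez
      rw [hzq, h3] at this
      exact this.symm
    have step2 := L1 (m q p) (m q z) q (L1 z p q hzp)
    rwa [hz] at step2
end

section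
/- In a branchwise commutative solid weak BCC-algebra, for x,y in the same branch, A(x) ∩ A(y) = A(x∧y), where A(z) = {w : w ≤ z} and x∧y = y*(y*x). -/
/-!
Below the meet `x ∧ y = y * (y * x)` of two elements of a branch lies below both of them: this
uses solidity together with branchwise commutativity `x * (x * y) = y * (y * x)`. Conversely, if
`w ≤ x` and `w ≤ y`, then `w` and `y` share a branch, so commutativity gives `w = y * (y * w)`,
and applying the antitone map `y * ·` twice to `w ≤ x` yields `y * (y * w) ≤ y * (y * x)`.
-/

section WeakBCC

variable {X : Type*} {m : X → X → X} {e : X}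

theorem weakBCC_le_trans (h1 : ∀ x y z : X, m (m (m x y) (m z y)) (m x z) = e)
    (h3 : ∀ x : X, m x e = x) {a b c : X} (hab : m a b = e) (hbc : m b c = e) :
    m a c = e := by
  simpa only [hbc, hab, h3] using h1 a c b

theorem weakBCC_sub_le_sub_left (h1 : ∀ x y z : X, m (m (m x y) (m z y)) (m x z) = e)
    (h3 : ∀ x : X, m x e = x) (y : X) {a b : X} (hab : m a b = e) :
    m (m y b) (m y a) = e := by
  simpa only [hab, h3] using h1 y b a

theorem weakBCC_inf_le_left (h2 : ∀ x : X, m x x = e) (h3 : ∀ x : X, m x e = x)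
    (hsolid : ∀ x y z : X, m e (m x y) = e → m (m x y) z = m (m x z) y)
    (hcomm : ∀ x y : X, m e (m x y) = e → m x (m x y) = m y (m y x))
    {x y : X} (hxy : m e (m x y) = e) : m (m y (m y x)) x = e := by
  have hswap : m (m x (m x y)) x = m (m x x) (m x y) :=
    (hsolid x x _ (by rw [h2, h3])).symm
  rwa [← hcomm x y hxy, hswap, h2]

theorem weakBCC_inf_le_right (h2 : ∀ x : X, m x x = e)
    (hsolid : ∀ x y z : X, m e (m x y) = e → m (m x y) z = m (m x z) y)
    (hcomm : ∀ x y : X, m e (m x y) = e → m x (m x y) = m y (m y x))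
    {x y : X} (hxy : m e (m x y) = e) : m (m y (m y x)) y = e := by
  rw [← hcomm x y hxy, ← hsolid x y _ hxy, h2]

theorem weakBCC_eq_inf_of_le (h3 : ∀ x : X, m x e = x)
    (hcomm : ∀ x y : X, m e (m x y) = e → m x (m x y) = m y (m y x))
    {w y : X} (hwy : m w y = e) : w = m y (m y w) := by
  have hw := hcomm w y (by rw [hwy, h3])
  rwa [hwy, h3] at hw

theorem weakBCC_le_inf (h1 : ∀ x y z : X, m (m (m x y) (m z y)) (m x z) = e)
    (h3 : ∀ x : X, m x e = x)
    (hcomm : ∀ x y : X, m e (m x y) = e → m x (m x y) = m y (m y x))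
    {w x y : X} (hwx : m w x = e) (hwy : m w y = e) : m w (m y (m y x)) = e := by
  rw [weakBCC_eq_inf_of_le h3 hcomm hwy]
  exact weakBCC_sub_le_sub_left h1 h3 y (weakBCC_sub_le_sub_left h1 h3 y hwx)

end WeakBCC

theorem stmt13_general (X : Type*) (m : X → X → X) (e : X)
    (h1 : ∀ x y z : X, m (m (m x y) (m z y)) (m x z) = e)
    (h2 : ∀ x : X, m x x = e)
    (h3 : ∀ x : X, m x e = x)
    (hsolid : ∀ x y z : X, m e (m x y) = e → m (m x y) z = m (m x z) y)
    (hcomm : ∀ x y : X, m e (m x y) = e → m x (m x y) = m y (m y x))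
    : ∀ x y : X, m e (m x y) = e →
      {w : X | m w x = e} ∩ {w : X | m w y = e} = {w : X | m w (m y (m y x)) = e} := by
  intro x y hxy
  ext w
  simp only [Set.mem_inter_iff, Set.mem_ofPred_eq]
  constructor
  · rintro ⟨hwx, hwy⟩
    exact weakBCC_le_inf h1 h3 hcomm hwx hwy
  · intro hw
    exact ⟨weakBCC_le_trans h1 h3 hw (weakBCC_inf_le_left h2 h3 hsolid hcomm hxy),
      weakBCC_le_trans h1 h3 hw (weakBCC_inf_le_right h2 hsolid hcomm hxy)⟩

theorem stmt13 (X : Type*) (m : X → X → X) (e : X)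
    (h1 : ∀ x y z : X, m (m (m x y) (m z y)) (m x z) = e)
    (h2 : ∀ x : X, m x x = e)
    (h3 : ∀ x : X, m x e = x)
    (h4 : ∀ x y : X, m x y = e → m y x = e → x = y)
    (hsolid : ∀ x y z : X, m e (m x y) = e → m (m x y) z = m (m x z) y)
    (hcomm : ∀ x y : X, m e (m x y) = e → m x (m x y) = m y (m y x))
    : ∀ x y : X, m e (m x y) = e →
      {w : X | m w x = e} ∩ {w : X | m w y = e} = {w : X | m w (m y (m y x)) = e} :=
  stmt13_general X m e h1 h2 h3 hsolid hcomm
end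

section
/- In a solid weak BCC-algebra, if A(x)∩A(y)=A(y*(y*x)) for all x,y in the same branch, then the algebra is branchwise commutative. -/
theorem stmt14 (X : Type*) (m : X → X → X) (e : X)
    (h1 : ∀ x y z : X, m (m (m x y) (m z y)) (m x z) = e)
    (h2 : ∀ x : X, m x x = e)
    (h3 : ∀ x : X, m x e = x)
    (h4 : ∀ x y : X, m x y = e → m y x = e → x = y)
    (hsolid : ∀ x y z : X, m e (m x y) = e → m (m x y) z = m (m x z) y)
    (hA : ∀ x y : X, m e (m x y) = e →
      {w : X | m w x = e} ∩ {w : X | m w y = e} = {w : X | m w (m y (m y x)) = e})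
    : ∀ x y : X, m e (m x y) = e → m x (m x y) = m y (m y x) := by
  intro x y hxy
  have A : ∀ z w : X, m (m e (m z w)) (m w z) = e := by
    intro z w
    have h := h1 w w z
    rwa [h2] at h
  have hyx : m e (m y x) = e := by
    have h := A x y
    rwa [hxy] at h
  have hs1 := hA x y hxy
  have hs2 := hA y x hyx
  have hmem1 : m (m y (m y x)) x = e ∧ m (m y (m y x)) y = e :=
    (Set.ext_iff.mp hs1 (m y (m y x))).mpr (h2 _)
  have hmem2 : m (m x (m x y)) y = e ∧ m (m x (m x y)) x = e :=
    (Set.ext_iff.mp hs2 (m x (m x y))).mpr (h2 _)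
  have h5 : m (m x (m x y)) (m y (m y x)) = e :=
    (Set.ext_iff.mp hs1 (m x (m x y))).mp ⟨hmem2.2, hmem2.1⟩
  have h6 : m (m y (m y x)) (m x (m x y)) = e :=
    (Set.ext_iff.mp hs2 (m y (m y x))).mp ⟨hmem1.2, hmem1.1⟩
  exact h4 _ _ h5 h6
end

section
/- Every solid branchwise implicative weak BCC-algebra is branchwise commutative. -/
theorem stmt15 (X : Type*) (m : X → X → X) (e : X)
    (h1 : ∀ x y z : X, m (m (m x y) (m z y)) (m x z) = e)
    (h2 : ∀ x : X, m x x = e)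
    (h3 : ∀ x : X, m x e = x)
    (h4 : ∀ x y : X, m x y = e → m y x = e → x = y)
    (hsolid : ∀ x y z : X, m e (m x y) = e → m (m x y) z = m (m x z) y)
    (himp : ∀ x y : X, m e (m x y) = e → m x (m y x) = x)
    : ∀ x y : X, m e (m x y) = e → m x (m x y) = m y (m y x) := by
  -- symmetry of "same branch"
  have hsym : ∀ x y : X, m e (m x y) = e → m e (m y x) = e := by
    intro x y h
    have := h1 y y x
    rw [h2, h] at this
    exact this
  -- antitonicity in the second argument: z ≤ y' → w*y' ≤ w*z
  have anti : ∀ w z y' : X, m z y' = e → m (m w y') (m w z) = e := by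
    intro w z y' h
    have := h1 w y' z
    rw [h, h3] at this
    exact this
  -- lemma C: t ≤ y → y*(y*t) = t
  have lemC : ∀ t y : X, m t y = e → m y (m y t) = t := by
    intro t y hty
    have hty' : m e (m t y) = e := by rw [hty]; exact h2 e
    have hb : m e (m y t) = e := hsym t y hty'
    have hle : m (m y (m y t)) t = e := by
      have := hsolid y t (m y t) hb
      rw [h2] at this
      exact this.symm
    have himp' : m t (m y t) = t := himp t y hty'
    have hge : m t (m y (m y t)) = e := by
      have := h1 t (m y t) y
      rw [himp', hty, h3] at this
      exact this
    exact h4 _ _ hle hge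
  -- main half: x*(x*y) ≤ y*(y*x)
  have half : ∀ x y : X, m e (m x y) = e →
      m (m x (m x y)) (m y (m y x)) = e := by
    intro x y hxy
    -- t ≤ x
    have htx : m (m x (m x y)) x = e := by
      have := h1 x (m x y) e
      rw [hxy, h3, h3] at this
      exact this
    -- t ≤ y
    have hty : m (m x (m x y)) y = e := by
      have := hsolid x y (m x y) hxy
      rw [h2] at this
      exact this.symm
    -- y*x ≤ y*t
    have hs : m (m y x) (m y (m x (m x y))) = e := anti y (m x (m x y)) x htx
    -- y*(y*t) ≤ y*(y*x)
    have hfin : m (m y (m y (m x (m x y)))) (m y (m y x)) = e :=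
      anti y (m y x) (m y (m x (m x y))) hs
    rw [lemC (m x (m x y)) y hty] at hfin
    exact hfin
  intro x y h
  exact h4 _ _ (half x y h) (half y x (hsym x y h))
end

section
/- A solid branchwise implicative weak BCC-algebra that is branchwise positive implicative (i.e., (x*y)*y = x*y for x,y in the same branch) satisfies 0*y = 0 for all y, hence is a commutative BCK-algebra. -/
theorem stmt16 (X : Type*) (m : X → X → X) (e : X)
    (h1 : ∀ x y z : X, m (m (m x y) (m z y)) (m x z) = e)
    (h2 : ∀ x : X, m x x = e)
    (h3 : ∀ x : X, m x e = x)
    (h4 : ∀ x y : X, m x y = e → m y x = e → x = y)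
    (hsolid : ∀ x y z : X, m e (m x y) = e → m (m x y) z = m (m x z) y)
    (himp : ∀ x y : X, m e (m x y) = e → m x (m y x) = x)
    (hpi : ∀ x y : X, m e (m x y) = e → m (m x y) y = m x y)
    : (∀ y : X, m e y = e) ∧ (∀ x y z : X, m (m x y) z = m (m x z) y) ∧
      (∀ x y : X, m x (m x y) = m y (m y x)) := by
  -- Part 1: e * y = e
  have e0 : ∀ y : X, m e y = e := by
    intro y
    have hc : m e (m y y) = e := by rw [h2, h3]
    have := hpi y y hc
    rwa [h2] at this
  -- Part 2: global exchange
  have exch : ∀ x y z : X, m (m x y) z = m (m x z) y := by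
    intro x y z
    exact hsolid x y z (e0 _)
  -- transitivity
  have trans : ∀ a b c : X, m a b = e → m b c = e → m a c = e := by
    intro a b c hab hbc
    have := h1 a c b
    rw [hab, h3, hbc, h3] at this
    exact this
  -- second-argument antitonicity: b ≤ c → a*c ≤ a*b
  have anti2 : ∀ a b c : X, m b c = e → m (m a c) (m a b) = e := by
    intro a b c hbc
    have := h1 a c b
    rw [exch (m a c) (m b c) (m a b)] at this
    rwa [hbc, h3] at this
  -- x*(x*y) ≤ y
  have ule_y : ∀ x y : X, m (m x (m x y)) y = e := by
    intro x y
    rw [exch x (m x y) y, h2]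
  -- x*(x*y) ≤ x
  have ule_x : ∀ x y : X, m (m x (m x y)) x = e := by
    intro x y
    rw [exch x (m x y) x, h2, e0]
  -- a*(y*a) = a (global implicativity) and (y*a)*a = y*a give a*(y*a)=a hence key:
  -- if a ≤ y then a ≤ y*(y*a)
  have key : ∀ a y : X, m a y = e → m a (m y (m y a)) = e := by
    intro a y hay
    have hb : m (m y a) a = m y a := hpi y a (e0 _)
    have hab : m a (m y a) = a := by
      have := himp a (m y a) (e0 _)
      rwa [hb] at this
    have := h1 a (m y a) y
    rwa [hab, hay, h3] at this
  -- u = x*(x*y) ≤ v = y*(y*x)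
  have half : ∀ x y : X, m (m x (m x y)) (m y (m y x)) = e := by
    intro x y
    set u := m x (m x y) with hu
    have step1 : m u (m y (m y u)) = e := key u y (ule_y x y)
    have step2 : m (m y x) (m y u) = e := anti2 y u x (ule_x x y)
    have step3 : m (m y (m y u)) (m y (m y x)) = e :=
      anti2 y (m y x) (m y u) step2
    exact trans _ _ _ step1 step3
  refine ⟨e0, exch, ?_⟩
  intro x y
  exact h4 _ _ (half x y) (half y x)
end

section
/- An implicative BCK-algebra (x*(y*x)=x for all x,y) is both commutative (x*(x*y)=y*(y*x)) and positive implicative ((x*y)*y=x*y). -/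
theorem stmt17 (X : Type*) (m : X → X → X) (e : X)
    (h1 : ∀ x y z : X, m (m (m x y) (m z y)) (m x z) = e)
    (h2 : ∀ x : X, m x x = e)
    (h3 : ∀ x : X, m x e = x)
    (h5 : ∀ x : X, m e x = e)
    (h6 : ∀ x y z : X, m (m x y) z = m (m x z) y)
    (h4 : ∀ x y : X, m x y = e → m y x = e → x = y)
    (himp : ∀ x y : X, m x (m y x) = x)
    : (∀ x y : X, m x (m x y) = m y (m y x)) ∧ (∀ x y : X, m (m x y) y = m x y) := by
  -- x*y ≤ x
  have lemA : ∀ x y : X, m (m x y) x = e := by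
    intro x y
    have h := h1 x y e
    rwa [h5, h3, h3] at h
  -- monotone in first argument
  have mono : ∀ a b c : X, m a b = e → m (m a c) (m b c) = e := by
    intro a b c hab
    have h := h1 a c b
    rwa [hab, h3] at h
  -- (x*y)*(x*z) ≤ z*y
  have lem3 : ∀ x y z : X, m (m (m x y) (m x z)) (m z y) = e := by
    intro x y z
    have h := h1 x y z
    rwa [h6] at h
  -- antitone in second argument: y ≤ z → x*z ≤ x*y
  have anti : ∀ x y z : X, m y z = e → m (m x z) (m x y) = e := by
    intro x y z hyz
    have h := lem3 x z y
    rwa [hyz, h3] at h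
  -- transitivity
  have trans : ∀ a b c : X, m a b = e → m b c = e → m a c = e := by
    intro a b c hab hbc
    have h := mono a b c hab
    rwa [hbc, h3] at h
  -- trick: a ≤ w*a → a = e
  have trick : ∀ a w : X, m a (m w a) = e → a = e := by
    intro a w hle
    have h := himp a w
    rw [hle] at h
    exact h.symm
  -- L1 : x*(x*y) ≤ y
  have L1 : ∀ x y : X, m (m x (m x y)) y = e := by
    intro x y
    -- step1 : (u*y)*(x*y) = e where u = x*(x*y)
    have step1 : m (m (m x (m x y)) y) (m x y) = e := by
      have h := h1 x (m x y) y
      rwa [himp y x] at h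
    -- step2 : u*y ≤ u
    have step2 := lemA (m x (m x y)) y
    -- step3 : u ≤ x*(u*y)
    have step3 := anti x (m (m x (m x y)) y) (m x y) step1
    -- step4 : u*y ≤ x*(u*y)
    have step4 := trans (m (m x (m x y)) y) (m x (m x y)) (m x (m (m x (m x y)) y)) step2 step3
    exact trick (m (m x (m x y)) y) x step4
  -- L2 : a ≤ b → a ≤ b*(b*a)
  have L2 : ∀ a b : X, m a b = e → m a (m b (m b a)) = e := by
    intro a b hab
    have h := h1 a (m b a) b
    rwa [himp a b, hab, h3] at h
  -- key for commutativity : x*(x*y) ≤ y*(y*x)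
  have key : ∀ x y : X, m (m x (m x y)) (m y (m y x)) = e := by
    intro x y
    have hu_y : m (m x (m x y)) y = e := L1 x y
    have hu_x : m (m x (m x y)) x = e := lemA x (m x y)
    -- u ≤ y*(y*u)
    have st1 := L2 (m x (m x y)) y hu_y
    -- y*x ≤ y*u
    have st2 := anti y (m x (m x y)) x hu_x
    -- y*(y*u) ≤ y*(y*x)
    have st3 := anti y (m y x) (m y (m x (m x y))) st2
    exact trans (m x (m x y)) (m y (m y (m x (m x y)))) (m y (m y x)) st1 st3
  constructor
  · intro x y
    exact h4 (m x (m x y)) (m y (m y x)) (key x y) (key y x)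
  · intro x y
    -- a = x*y ; show a*y = a
    have hle : m (m (m x y) y) (m x y) = e := lemA (m x y) y
    -- s = a*(a*y); s ≤ y
    have hsy : m (m (m x y) (m (m x y) y)) y = e := L1 (m x y) y
    -- s ≤ a
    have hsa : m (m (m x y) (m (m x y) y)) (m x y) = e := lemA (m x y) (m (m x y) y)
    -- a = x*y ≤ x*s
    have has : m (m x y) (m x (m (m x y) (m (m x y) y))) = e :=
      anti x (m (m x y) (m (m x y) y)) y hsy
    -- s ≤ x*s
    have hss : m (m (m x y) (m (m x y) y)) (m x (m (m x y) (m (m x y) y))) = e :=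
      trans (m (m x y) (m (m x y) y)) (m x y) (m x (m (m x y) (m (m x y) y))) hsa has
    have hs : m (m x y) (m (m x y) y) = e :=
      trick (m (m x y) (m (m x y) y)) x hss
    exact h4 (m (m x y) y) (m x y) hle hs
end

section
/- A BCK-algebra that is both commutative (x*(x*y)=y*(y*x)) and positive implicative ((x*y)*y=x*y) is implicative: x*(y*x)=x for all x,y. -/
theorem stmt18 (X : Type*) (m : X → X → X) (e : X)
    (h1 : ∀ x y z : X, m (m (m x y) (m z y)) (m x z) = e)
    (h2 : ∀ x : X, m x x = e)
    (h3 : ∀ x : X, m x e = x)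
    (h5 : ∀ x : X, m e x = e)
    (h6 : ∀ x y z : X, m (m x y) z = m (m x z) y)
    (h4 : ∀ x y : X, m x y = e → m y x = e → x = y)
    (hcomm : ∀ x y : X, m x (m x y) = m y (m y x))
    (hpi : ∀ x y : X, m (m x y) y = m x y)
    : ∀ x y : X, m x (m y x) = x := by
  intro x y
  apply h4
  · rw [h6, h2, h5]
  · rw [hcomm, hpi, h2]
end
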